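/- Let P be a simplicial reflexive polytope of dimension n with δ_P > 0. Then the number of vertices of P satisfies |V(P)| ≤ n + n/δ_P. -/

import Mathlib

open Set Pointwise

namespace Fano

/-- The ambient rational vector space `N_ℚ = ℚⁿ` (identified with its dual `M_ℚ`). -/
abbrev E (n : ℕ) : Type := Fin n → ℚ

/-- The standard pairing `⟨x, y⟩ = ∑ i, x i * y i` between `N_ℚ` and `M_ℚ`. -/
def pairing {n : ℕ} (x y : E n) : ℚ := ∑ i, x i * y i

/-- A point of `ℚⁿ` is a lattice point if all its coordinates are integers. -/
def IsLatticePt {n : ℕ} (x : E n) : Prop := ∀ i, ∃ z : ℤ, x i = (z : ℚ)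

/-- A lattice polytope: the convex hull of finitely many lattice points. -/
def IsLatticePolytope {n : ℕ} (P : Set (E n)) : Prop :=
  ∃ S : Finset (E n), (∀ x ∈ S, IsLatticePt x) ∧ P = convexHull ℚ (S : Set (E n))

/-- The dual polytope `P* = {y | ⟨x, y⟩ ≥ -1 for all x ∈ P}`. -/
def dualPolytope {n : ℕ} (P : Set (E n)) : Set (E n) :=
  {y | ∀ x ∈ P, -1 ≤ pairing x y}

/-- The set of vertices (= extreme points) of a polytope. -/
def vertices {n : ℕ} (P : Set (E n)) : Set (E n) := Set.extremePoints ℚ P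

/-- `F` is a (nonempty, proper) face of `P`: it is cut out by a supporting hyperplane. -/
def IsFace {n : ℕ} (P F : Set (E n)) : Prop :=
  ∃ (u : E n) (c : ℚ), (∀ x ∈ P, c ≤ pairing x u) ∧
    F = {x ∈ P | pairing x u = c} ∧ F.Nonempty ∧ F ≠ P

/-- A facet of an `n`-dimensional polytope: a face of dimension `n - 1`. -/
def IsFacet {n : ℕ} (P F : Set (E n)) : Prop :=
  IsFace P F ∧ Module.finrank ℚ (affineSpan ℚ F).direction = n - 1

/-- A reflexive polytope: a lattice polytope containing the origin in its interior
(hence of full dimension `n`) whose dual polytope is again a lattice polytope. -/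
def IsReflexivePolytope {n : ℕ} (P : Set (E n)) : Prop :=
  IsLatticePolytope P ∧ (0 : E n) ∈ interior P ∧ IsLatticePolytope (dualPolytope P)

/-- A polytope is simplicial if every facet has exactly `n` vertices
and these are linearly independent. -/
def IsSimplicial {n : ℕ} (P : Set (E n)) : Prop :=
  ∀ F : Set (E n), IsFacet P F →
    ∃ e : Fin n → E n, vertices F = Set.range e ∧ LinearIndependent ℚ e

/-- For `u ∈ V(P*)`, the corresponding facet `F_u = {x ∈ P | ⟨x, u⟩ = -1}` of `P`. -/
def facetOf {n : ℕ} (P : Set (E n)) (u : E n) : Set (E n) :=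
  {x ∈ P | pairing x u = -1}

/-- `δ` is the quantity `δ_P = min{⟨v,u⟩ | v ∈ V(P), u ∈ V(P*), v ∉ F_u}`. -/
def IsDeltaOf {n : ℕ} (P : Set (E n)) (δ : ℚ) : Prop :=
  (∃ v ∈ vertices P, ∃ u ∈ vertices (dualPolytope P), v ∉ facetOf P u ∧ pairing v u = δ) ∧
  (∀ v ∈ vertices P, ∀ u ∈ vertices (dualPolytope P), v ∉ facetOf P u → δ ≤ pairing v u)

/-- A vertex `v` is adjacent to a facet `F = Conv(e₁, …, eₙ)` of a simplicial polytope if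
replacing some vertex of `F` by `v` again yields a facet of `P`. -/
def AdjacentTo {n : ℕ} (P : Set (E n)) (v : E n) (F : Set (E n)) : Prop :=
  ∃ w ∈ vertices F, IsFacet P (convexHull ℚ (insert v (vertices F \ {w})))

/-! ### Auxiliary lemmas -/

/-- The pairing as a linear map in the first argument. -/
def pl {n : ℕ} (u : E n) : E n →ₗ[ℚ] ℚ where
  toFun x := pairing x u
  map_add' x y := by simp [pairing, add_mul, Finset.sum_add_distrib]
  map_smul' c x := by simp [pairing, Finset.mul_sum, mul_assoc]

lemma pl_apply {n : ℕ} (u x : E n) : pl u x = pairing x u := rfl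

lemma pairing_comm {n : ℕ} (x y : E n) : pairing x y = pairing y x := by
  simp [pairing, mul_comm]

lemma pairing_zero_right {n : ℕ} (x : E n) : pairing x 0 = 0 := by simp [pairing]

lemma pairing_zero_left {n : ℕ} (x : E n) : pairing 0 x = 0 := by simp [pairing]

lemma pairing_self_pos {n : ℕ} {x : E n} (hx : x ≠ 0) : 0 < pairing x x := by
  obtain ⟨i, hi⟩ : ∃ i, x i ≠ 0 := by
    by_contra h; push_neg at h; exact hx (funext h)
  refine Finset.sum_pos' (fun j _ => mul_self_nonneg _) ⟨i, Finset.mem_univ i, ?_⟩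
  exact mul_self_pos.2 hi

lemma pairing_right_add {n : ℕ} (v y z : E n) :
    pairing v (y + z) = pairing v y + pairing v z := by
  rw [pairing_comm, ← pl_apply, map_add, pl_apply, pl_apply, pairing_comm y, pairing_comm z]

lemma pairing_right_smul {n : ℕ} (v : E n) (c : ℚ) (y : E n) :
    pairing v (c • y) = c * pairing v y := by
  rw [pairing_comm, ← pl_apply, map_smul, pl_apply, pairing_comm y]; rfl

/-- The dual of a convex hull is cut out by the generators. -/
lemma dual_convexHull_eq {n : ℕ} (S : Set (E n)) :
    dualPolytope (convexHull ℚ S) = {y | ∀ v ∈ S, -1 ≤ pairing v y} := by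
  ext y
  refine ⟨fun hy v hv => hy v (subset_convexHull ℚ S hv), fun hy x hx => ?_⟩
  exact convexHull_min hy (convex_halfSpace_ge (pl y).isLinear (-1)) hx

lemma zero_mem_dual {n : ℕ} (P : Set (E n)) : (0 : E n) ∈ dualPolytope P := by
  intro x _
  simp [pairing]

/-- An extreme point of `P` lying in a subset `F` is an extreme point of `F`. -/
lemma extremePoint_of_subset {n : ℕ} {P F : Set (E n)} {v : E n}
    (hv : v ∈ Set.extremePoints ℚ P) (hvF : v ∈ F) (hFP : F ⊆ P) :
    v ∈ Set.extremePoints ℚ F :=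
  ⟨hvF, fun _ ha _ hb h => hv.2 (hFP ha) (hFP hb) h⟩

/-- Finite Krein–Milman: the convex hull of a finite set is the convex hull of its
extreme points. -/
lemma convexHull_extremePoints_finset {V : Type*} [AddCommGroup V] [Module ℚ V]
    (T : Finset V) :
    convexHull ℚ (T : Set V) =
      convexHull ℚ (Set.extremePoints ℚ (convexHull ℚ (T : Set V))) := by
  refine le_antisymm ?_ (convexHull_min extremePoints_subset (convex_convexHull ℚ _))
  classical
  induction T using Finset.strongInductionOn with
  | _ T ih =>
  by_cases hTE : (T : Set V) ⊆ Set.extremePoints ℚ (convexHull ℚ (T : Set V))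
  · exact convexHull_mono hTE
  · -- pick a non-extreme generator t
    rw [Set.not_subset] at hTE
    obtain ⟨t, htT, htE⟩ := hTE
    have htP : t ∈ convexHull ℚ (T : Set V) := subset_convexHull ℚ _ htT
    -- t lies on an open segment with distinct endpoints in the hull
    rw [mem_extremePoints] at htE
    push_neg at htE
    obtain ⟨a, ha, b, hb, hseg, hne⟩ := htE htP
    have hat : a ≠ t := by
      rintro rfl
      have hbt : a = b := left_mem_openSegment_iff.1 hseg
      exact hne rfl hbt.symm
    have hbt : b ≠ t := by
      rintro rfl
      rw [openSegment_symm] at hseg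
      have : b = a := left_mem_openSegment_iff.1 hseg
      exact hne this.symm rfl
    -- the rest of the generators
    have htT' : t ∈ T := Finset.mem_coe.1 htT
    have hRne : ((T.erase t : Finset V) : Set V).Nonempty := by
      rcases (T.erase t).eq_empty_or_nonempty with h | h
      · exfalso
        have hsub : (T : Set V) ⊆ {t} := by
          intro x hx
          by_contra hxt
          have : x ∈ T.erase t := Finset.mem_erase.2 ⟨hxt, Finset.mem_coe.1 hx⟩
          simp [h] at this
        have := convexHull_min hsub (convex_singleton t) ha
        exact hat (by simpa using this)
      · exact Finset.coe_nonempty.2 h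
    have hTins : (T : Set V) = insert t ((T.erase t : Finset V) : Set V) := by
      rw [Finset.coe_erase, Set.insert_diff_singleton, Set.insert_eq_self.2 htT]
    -- decompose a and b over the join of t and conv (T.erase t)
    have hjoin : convexHull ℚ (T : Set V) =
        convexJoin ℚ {t} (convexHull ℚ ((T.erase t : Finset V) : Set V)) := by
      rw [hTins, convexHull_insert hRne]
    rw [hjoin, mem_convexJoin] at ha hb
    obtain ⟨t₁, ht₁, a₂, ha₂, haseg⟩ := ha
    obtain ⟨t₂, ht₂, b₂, hb₂, hbseg⟩ := hb
    rw [mem_singleton_iff] at ht₁ ht₂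
    rw [ht₁] at haseg
    rw [ht₂] at hbseg
    obtain ⟨α, α', hα, hα', hαs, haeq⟩ := haseg
    obtain ⟨β, β', hβ, hβ', hβs, hbeq⟩ := hbseg
    obtain ⟨θ, θ', hθ, hθ', hθs, hteq⟩ := hseg
    -- main algebra
    have key : (θ * α' + θ' * β') • t = (θ * α') • a₂ + (θ' * β') • b₂ := by
      rw [← haeq, ← hbeq] at hteq
      have hcs : θ * α' + θ' * β' = 1 - θ * α - θ' * β := by nlinarith [hαs, hβs, hθs]
      rw [hcs]
      linear_combination (norm := module) -hteq
    have hc0 : 0 ≤ θ * α' + θ' * β' :=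
      add_nonneg (mul_nonneg hθ.le hα') (mul_nonneg hθ'.le hβ')
    have htR : t ∈ convexHull ℚ ((T.erase t : Finset V) : Set V) := by
      rcases eq_or_lt_of_le hc0 with hc | hc
      · -- degenerate case is impossible
        exfalso
        have h1 : θ * α' = 0 ∧ θ' * β' = 0 := by
          constructor <;> nlinarith [mul_nonneg hθ.le hα', mul_nonneg hθ'.le hβ']
        have hα'0 : α' = 0 := by
          rcases mul_eq_zero.1 h1.1 with h | h
          · exact absurd h hθ.ne'
          · exact h
        have : a = t := by rw [← haeq, hα'0]; simp [show α = 1 by linarith]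
        exact hat this
      · -- divide by the positive total mass
        set c := θ * α' + θ' * β' with hcdef
        have : t = (θ * α' / c) • a₂ + (θ' * β' / c) • b₂ := by
          have := congrArg (fun z => c⁻¹ • z) key
          simpa [smul_smul, smul_add, inv_mul_cancel₀ hc.ne', div_eq_inv_mul, mul_comm,
            mul_left_comm] using this
        have hmem := (convex_convexHull ℚ ((T.erase t : Finset V) : Set V)) ha₂ hb₂
          (div_nonneg (mul_nonneg hθ.le hα') hc0)
          (div_nonneg (mul_nonneg hθ'.le hβ') hc0) (by field_simp; linarith [hcdef])
        rwa [← this] at hmem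
    -- hence the hull doesn't change upon erasing t
    have hull_eq : convexHull ℚ ((T.erase t : Finset V) : Set V) = convexHull ℚ (T : Set V) := by
      refine le_antisymm (convexHull_mono (Finset.coe_subset.2 (Finset.erase_subset t T))) ?_
      refine convexHull_min ?_ (convex_convexHull ℚ _)
      intro x hx
      by_cases hxt : x = t
      · rw [hxt]; exact htR
      · exact subset_convexHull ℚ _
          (Finset.mem_coe.2 (Finset.mem_erase.2 ⟨hxt, Finset.mem_coe.1 hx⟩))
    have := ih (T.erase t) (Finset.erase_ssubset htT')
    rw [hull_eq] at this
    exact fun x hx => this hx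

/-- At an extreme point of the dual polytope, the active constraints span everything. -/
lemma span_active_eq_top {n : ℕ} (S : Finset (E n)) {u : E n}
    (hu : u ∈ Set.extremePoints ℚ (dualPolytope (convexHull ℚ (S : Set (E n))))) :
    Submodule.span ℚ {v : E n | v ∈ S ∧ pairing v u = -1} = ⊤ := by
  classical
  by_contra hne
  have hudual : u ∈ dualPolytope (convexHull ℚ (S : Set (E n))) := hu.1
  have huS : ∀ v ∈ S, -1 ≤ pairing v u := by
    rw [dual_convexHull_eq] at hudual
    exact hudual
  -- a nonzero functional vanishing on the active constraints
  obtain ⟨f, hf0, hfmap⟩ :=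
    Submodule.exists_dual_map_eq_bot_of_lt_top (lt_top_iff_ne_top.2 hne) inferInstance
  set d : E n := fun i => f (fun j => if i = j then 1 else 0) with hd
  have hfd : ∀ x : E n, f x = pairing x d := by
    intro x
    conv_lhs => rw [pi_eq_sum_univ x]
    rw [map_sum]
    simp only [map_smul, smul_eq_mul]
    rfl
  have hdAct : ∀ v ∈ S, pairing v u = -1 → pairing v d = 0 := by
    intro v hv hvu
    have hvmem : v ∈ Submodule.span ℚ {v : E n | v ∈ S ∧ pairing v u = -1} :=
      Submodule.subset_span ⟨hv, hvu⟩
    have : f v ∈ Submodule.map f (Submodule.span ℚ {v : E n | v ∈ S ∧ pairing v u = -1}) :=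
      Submodule.mem_map_of_mem hvmem
    rw [hfmap] at this
    rw [← hfd]
    exact (Submodule.mem_bot ℚ).1 this
  have hd0 : d ≠ 0 := by
    intro h
    apply hf0
    apply LinearMap.ext
    intro x
    rw [hfd x, h]
    simp [pairing]
  -- choose a small ε
  set T' := S.filter (fun v => pairing v u ≠ -1) with hT'
  set g : E n → ℚ := fun v => (pairing v u + 1) / (|pairing v d| + 1) with hg
  set ε : ℚ := if h : T'.Nonempty then T'.inf' h g else 1 with hε
  have hgpos : ∀ v ∈ T', 0 < g v := by
    intro v hv
    rw [hT', Finset.mem_filter] at hv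
    have h1 : -1 ≤ pairing v u := huS v hv.1
    have h2 : -1 < pairing v u := lt_of_le_of_ne h1 (Ne.symm hv.2)
    have : (0:ℚ) < |pairing v d| + 1 := by positivity
    exact div_pos (by linarith) this
  have hεpos : 0 < ε := by
    rw [hε]
    split_ifs with h
    · exact (Finset.lt_inf'_iff h).2 (fun v hv => hgpos v hv)
    · norm_num
  have hkey : ∀ v ∈ T', |ε * pairing v d| ≤ pairing v u + 1 := by
    intro v hv
    have hεle : ε ≤ g v := by
      rw [hε]
      rw [dif_pos ⟨v, hv⟩]
      exact Finset.inf'_le g hv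
    have habs : |ε * pairing v d| = ε * |pairing v d| := by
      rw [abs_mul, abs_of_pos hεpos]
    rw [habs]
    have h1 : ε * |pairing v d| ≤ g v * |pairing v d| :=
      mul_le_mul_of_nonneg_right hεle (abs_nonneg _)
    refine h1.trans ?_
    rw [hg]
    have hq : (0:ℚ) ≤ |pairing v d| := abs_nonneg _
    have hp : 0 ≤ pairing v u + 1 := by
      have := huS v (by rw [hT', Finset.mem_filter] at hv; exact hv.1)
      linarith
    rw [div_mul_eq_mul_div, div_le_iff₀ (by positivity)]
    nlinarith
  -- u ± ε • d are still in the dual polytope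
  have hmem : ∀ s : ℚ, |s| = ε →
      u + s • d ∈ dualPolytope (convexHull ℚ (S : Set (E n))) := by
    intro s hs
    rw [dual_convexHull_eq]
    intro v hv
    rw [pairing_right_add, pairing_right_smul]
    by_cases hvu : pairing v u = -1
    · rw [hdAct v hv hvu, hvu]
      simp
    · have hvT' : v ∈ T' := by rw [hT', Finset.mem_filter]; exact ⟨hv, hvu⟩
      have := hkey v hvT'
      have habs : |s * pairing v d| ≤ pairing v u + 1 := by
        rw [abs_mul, abs_of_pos hεpos] at this
        rw [abs_mul, hs]
        exact this
      have := abs_le.1 habs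
      linarith [this.1]
  have h₁ := hmem ε (abs_of_pos hεpos)
  have h₂ := hmem (-ε) (by rw [abs_neg, abs_of_pos hεpos])
  have hseg : u ∈ openSegment ℚ (u + (-ε) • d) (u + ε • d) := by
    refine ⟨1/2, 1/2, by norm_num, by norm_num, by norm_num, ?_⟩
    module
  have := hu.2 h₂ h₁ hseg
  have h3 : u + (-ε) • d = u := this
  have h4 : (-ε) • d = 0 := by
    have := congrArg (fun z => z - u) h3
    simpa [add_comm] using this
  rcases smul_eq_zero.1 h4 with h | h
  · exact absurd (neg_eq_zero.1 h) (ne_of_gt hεpos)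
  · exact hd0 h

/-- For an extreme point `u` of the dual polytope, `facetOf P u` is a facet. -/
lemma isFacet_facetOf {n : ℕ} (hn : 1 ≤ n) (S : Finset (E n))
    (hP0 : (0 : E n) ∈ convexHull ℚ (S : Set (E n))) {u : E n}
    (hu : u ∈ Set.extremePoints ℚ (dualPolytope (convexHull ℚ (S : Set (E n))))) :
    IsFacet (convexHull ℚ (S : Set (E n))) (facetOf (convexHull ℚ (S : Set (E n))) u) := by
  classical
  have hspan := span_active_eq_top S hu
  set Act : Set (E n) := {v : E n | v ∈ S ∧ pairing v u = -1} with hAct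
  have hActne : Act.Nonempty := by
    rcases Act.eq_empty_or_nonempty with h | h
    · exfalso
      rw [h, Submodule.span_empty] at hspan
      have h1 : Module.finrank ℚ (⊥ : Submodule ℚ (E n)) = 0 := finrank_bot ℚ (E n)
      rw [hspan, finrank_top] at h1
      have h2 : Module.finrank ℚ (E n) = n := Module.finrank_fin_fun ℚ
      omega
    · exact h
  obtain ⟨v₀, hv₀⟩ := hActne
  have hActF : Act ⊆ facetOf (convexHull ℚ (S : Set (E n))) u := by
    intro v hv
    exact ⟨subset_convexHull ℚ _ hv.1, hv.2⟩
  have hu0 : u ≠ 0 := by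
    rintro rfl
    have := hv₀.2
    rw [pairing_zero_right] at this
    norm_num at this
  constructor
  · -- it is a face
    refine ⟨u, -1, fun x hx => hu.1 x hx, rfl, ⟨v₀, hActF hv₀⟩, ?_⟩
    intro hFP
    have h0F : (0 : E n) ∈ facetOf (convexHull ℚ (S : Set (E n))) u := by
      rw [hFP]; exact hP0
    have := h0F.2
    rw [pairing_zero_left] at this
    norm_num at this
  · -- dimension count
    have hdir : (affineSpan ℚ (facetOf (convexHull ℚ (S : Set (E n))) u)).direction =
        vectorSpan ℚ (facetOf (convexHull ℚ (S : Set (E n))) u) := direction_affineSpan ℚ _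
    -- upper bound: contained in the kernel of the pairing with u
    have hker : vectorSpan ℚ (facetOf (convexHull ℚ (S : Set (E n))) u) ≤
        LinearMap.ker (pl u) := by
      rw [vectorSpan_def]
      rw [Submodule.span_le]
      rintro z ⟨x, hx, y, hy, rfl⟩
      have : pl u (x -ᵥ y) = 0 := by
        rw [vsub_eq_sub, map_sub, pl_apply, pl_apply, hx.2, hy.2]
        ring
      exact this
    have hpuu : 0 < pairing u u := pairing_self_pos hu0
    have hsurj : Function.Surjective (pl u) := by
      intro q
      refine ⟨(q / pairing u u) • u, ?_⟩
      rw [map_smul, pl_apply, smul_eq_mul]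
      field_simp
    have hrange : LinearMap.range (pl u) = ⊤ := LinearMap.range_eq_top.2 hsurj
    have hrk := LinearMap.finrank_range_add_finrank_ker (pl u)
    rw [hrange, finrank_top, Module.finrank_self] at hrk
    have hEn : Module.finrank ℚ (E n) = n := Module.finrank_fin_fun ℚ
    rw [hEn] at hrk
    have hker_rank : Module.finrank ℚ (LinearMap.ker (pl u)) = n - 1 := by omega
    have hupper : Module.finrank ℚ
        (vectorSpan ℚ (facetOf (convexHull ℚ (S : Set (E n))) u)) ≤ n - 1 := by
      rw [← hker_rank]
      exact Submodule.finrank_mono hker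
    -- lower bound via the spanning active set
    set W : Submodule ℚ (E n) := Submodule.span ℚ ((fun v => v - v₀) '' Act) with hW
    have hWle : W ≤ vectorSpan ℚ (facetOf (convexHull ℚ (S : Set (E n))) u) := by
      rw [hW, Submodule.span_le]
      rintro z ⟨v, hv, rfl⟩
      have := vsub_mem_vectorSpan ℚ (hActF hv) (hActF hv₀)
      rwa [vsub_eq_sub] at this
    have hsup : (⊤ : Submodule ℚ (E n)) ≤ W ⊔ Submodule.span ℚ {v₀} := by
      rw [← hspan, Submodule.span_le]
      intro v hv
      have h1 : v - v₀ ∈ W := Submodule.subset_span ⟨v, hv, rfl⟩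
      have h2 : v₀ ∈ Submodule.span ℚ {v₀} := Submodule.subset_span rfl
      have : v - v₀ + v₀ ∈ W ⊔ Submodule.span ℚ {v₀} :=
        Submodule.add_mem _ (Submodule.mem_sup_left h1) (Submodule.mem_sup_right h2)
      rwa [sub_add_cancel] at this
    have hv₀rank : Module.finrank ℚ (Submodule.span ℚ ({v₀} : Set (E n))) ≤ 1 := by
      have := finrank_span_finset_le_card (R := ℚ) ({v₀} : Finset (E n))
      simp at this; exact this
    have hn1 : n ≤ Module.finrank ℚ W + 1 := by
      have h1 : Module.finrank ℚ (⊤ : Submodule ℚ (E n)) ≤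
          Module.finrank ℚ ↥(W ⊔ Submodule.span ℚ ({v₀} : Set (E n))) := Submodule.finrank_mono hsup
      rw [finrank_top, hEn] at h1
      have h2 := Submodule.finrank_sup_add_finrank_inf_eq W (Submodule.span ℚ ({v₀} : Set (E n)))
      omega
    have hlower : n - 1 ≤ Module.finrank ℚ
        (vectorSpan ℚ (facetOf (convexHull ℚ (S : Set (E n))) u)) := by
      have hWfin := Submodule.finrank_mono hWle
      have h3 : n ≤ Module.finrank ℚ
          (vectorSpan ℚ (facetOf (convexHull ℚ (S : Set (E n))) u)) + 1 :=
        hn1.trans (Nat.add_le_add_right hWfin 1)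
      omega
    rw [hdir]
    exact le_antisymm hupper hlower

/-- If `P` is a simplicial reflexive polytope of dimension `n` with
`δ_P > 0`, then `|V(P)| ≤ n + n / δ_P`. -/
theorem card_vertices_le_of_delta_pos {n : ℕ} (hn : 1 ≤ n) (P : Set (E n)) (δ : ℚ)
    (hrefl : IsReflexivePolytope P) (hsimp : IsSimplicial P)
    (hδ : IsDeltaOf P δ) (hpos : 0 < δ) :
    ((vertices P).ncard : ℚ) ≤ n + n / δ := by
  classical
  obtain ⟨⟨S, hSlat, rfl⟩, hint, ⟨T, hTlat, hdT⟩⟩ := hrefl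
  set P := convexHull ℚ (S : Set (E n)) with hP
  -- the vertices form a finite set
  have hVsub : vertices P ⊆ (S : Set (E n)) := extremePoints_convexHull_subset
  have hVfin : (vertices P).Finite := S.finite_toSet.subset hVsub
  set Vf : Finset (E n) := hVfin.toFinset with hVf
  -- the extreme points of the dual polytope
  set Ext : Set (E n) := Set.extremePoints ℚ (dualPolytope P) with hExt
  have hExtsub : Ext ⊆ (T : Set (E n)) := by
    rw [hExt, hdT]
    exact extremePoints_convexHull_subset
  have hExtfin : Ext.Finite := T.finite_toSet.subset hExtsub
  -- 0 lies in the convex hull of the extreme points of the dual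
  have h0ext : (0 : E n) ∈ convexHull ℚ Ext := by
    have h0 : (0 : E n) ∈ convexHull ℚ (T : Set (E n)) := hdT ▸ zero_mem_dual P
    rw [convexHull_extremePoints_finset T, ← hdT] at h0
    exact h0
  have hExtne : Ext.Nonempty := by
    rcases Ext.eq_empty_or_nonempty with h | h
    · rw [h, convexHull_empty] at h0ext
      exact absurd h0ext (Set.notMem_empty 0)
    · exact h
  -- pick the dual vertex minimizing the pairing with the vertex sum
  set s : E n := ∑ v ∈ Vf, v with hs
  obtain ⟨u₀, hu₀mem, hu₀min⟩ := hExtfin.toFinset.exists_min_image (fun y => pl s y)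
    (by rwa [Set.Finite.toFinset_nonempty])
  have hu₀ : u₀ ∈ Ext := (Set.Finite.mem_toFinset hExtfin).1 hu₀mem
  have h0le : pl s u₀ ≤ (0 : ℚ) := by
    have hsub : Ext ⊆ {y : E n | pl s u₀ ≤ pl s y} := by
      intro y hy
      exact hu₀min y ((Set.Finite.mem_toFinset hExtfin).2 hy)
    have hconv : Convex ℚ {y : E n | pl s u₀ ≤ pl s y} :=
      convex_halfSpace_ge (pl s).isLinear _
    have := convexHull_min hsub hconv h0ext
    simpa using this
  -- the corresponding facet
  have hfacet : IsFacet P (facetOf P u₀) :=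
    isFacet_facetOf hn S (interior_subset hint) hu₀
  obtain ⟨e, he, heLI⟩ := hsimp _ hfacet
  -- split the vertices
  set Bf : Finset (E n) := Vf.filter (fun v => pairing v u₀ = -1) with hBf
  set Af : Finset (E n) := Vf.filter (fun v => ¬pairing v u₀ = -1) with hAf
  have hsplit : Bf.card + Af.card = Vf.card := Finset.card_filter_add_card_filter_not _
  -- the vertices on the facet are among the n facet vertices
  have hBsub : (Bf : Set (E n)) ⊆ Set.range e := by
    intro v hv
    rw [Finset.mem_coe, hBf, Finset.mem_filter] at hv
    have hvV : v ∈ vertices P := (Set.Finite.mem_toFinset hVfin).1 hv.1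
    have hvF : v ∈ facetOf P u₀ := ⟨extremePoints_subset hvV, hv.2⟩
    have : v ∈ vertices (facetOf P u₀) :=
      extremePoint_of_subset hvV hvF (fun x hx => hx.1)
    rwa [he] at this
  have hBcard : Bf.card ≤ n := by
    have h1 : (Bf : Set (E n)).ncard ≤ (Set.range e).ncard :=
      Set.ncard_le_ncard hBsub (Set.finite_range e)
    have h2 : (Set.range e).ncard ≤ n := by
      rw [← Set.image_univ]
      have := Set.ncard_image_le (s := (Set.univ : Set (Fin n))) (f := e) Set.finite_univ
      simpa [Set.ncard_univ] using this
    rw [Set.ncard_coe_finset] at h1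
    omega
  -- the off-facet vertices pair at least δ with u₀
  have hAlow : ∀ v ∈ Af, δ ≤ pairing v u₀ := by
    intro v hv
    rw [hAf, Finset.mem_filter] at hv
    have hvV : v ∈ vertices P := (Set.Finite.mem_toFinset hVfin).1 hv.1
    have hvnF : v ∉ facetOf P u₀ := fun h => hv.2 h.2
    exact hδ.2 v hvV u₀ hu₀ hvnF
  -- sum estimate
  have hsum : ∑ v ∈ Vf, pairing v u₀ ≤ 0 := by
    have h1 : pl u₀ s = ∑ v ∈ Vf, pairing v u₀ := by
      rw [hs, map_sum]
      rfl
    have h2 : pl s u₀ = pl u₀ s := by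
      rw [pl_apply, pl_apply, pairing_comm]
    rw [← h1, ← h2]
    exact h0le
  have hsum_split : ∑ v ∈ Bf, pairing v u₀ + ∑ v ∈ Af, pairing v u₀ =
      ∑ v ∈ Vf, pairing v u₀ := Finset.sum_filter_add_sum_filter_not _ _ _
  have hBsum : ∑ v ∈ Bf, pairing v u₀ = -(Bf.card : ℚ) := by
    have hconst : ∀ v ∈ Bf, pairing v u₀ = (-1 : ℚ) := by
      intro v hv
      rw [hBf, Finset.mem_filter] at hv
      exact hv.2
    rw [Finset.sum_congr rfl hconst, Finset.sum_const, nsmul_eq_mul]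
    ring
  have hAsum : (Af.card : ℚ) * δ ≤ ∑ v ∈ Af, pairing v u₀ := by
    have := Finset.card_nsmul_le_sum Af (fun v => pairing v u₀) δ hAlow
    rwa [nsmul_eq_mul] at this
  have hkey : (Af.card : ℚ) * δ ≤ (Bf.card : ℚ) := by
    have := hsum_split ▸ hsum
    rw [hBsum] at this
    linarith
  -- put everything together
  have hncard : (vertices P).ncard = Vf.card := Set.ncard_eq_toFinset_card _ hVfin
  rw [hncard]
  have hAcard : (Af.card : ℚ) ≤ (n : ℚ) / δ := by
    rw [le_div_iff₀ hpos]
    have : (Bf.card : ℚ) ≤ (n : ℚ) := by exact_mod_cast hBcard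
    linarith
  have hVcard : (Vf.card : ℚ) = (Bf.card : ℚ) + (Af.card : ℚ) := by
    exact_mod_cast hsplit.symm
  rw [hVcard]
  have : (Bf.card : ℚ) ≤ (n : ℚ) := by exact_mod_cast hBcard
  linarith

end Fano
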